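/- Define P_{n,k,l}(x) = ∑_{s=0}^{l} (-1)^s C(n-k, s) C(n-s-1, l-s) x^{n-2s}. Then for integers n ≥ 1, 0 ≤ k ≤ n-1, and any integer l, the sum ∑_{s=0}^{n} (-1)^s P_{n,k+1,s}(x) P_{n+1,s+1,l}(x) equals (-1)^k (δ_{k,l} x^3 + δ_{k,l-1}(x^3 − x)). -/

import Mathlib

/-!
The homogeneous generating function of `P_{n,k,·}` is a product of powers of linear forms:
`∑_l P_{n,k,l} A^l B^(n-1-l) = x^n (A + B)^(k-1) (B + (1 - x⁻²) A)^(n-k)`, by two binomial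
expansions. With `A = t, B = 1` this makes `P_{n+1,s+1,l}` the coefficient of `t^l` in
`x^(n+1) (1 + t)^s (1 + (1 - x⁻²) t)^(n-s)`, so the convolution is the coefficient of `t^l` in
`x^(n+1) B ∑_s P_{n,k+1,s} A^s B^(n-1-s)` with `A = -(1 + t)`, `B = 1 + (1 - x⁻²) t`.
For this choice `A + B = -x⁻² t` and `B + (1 - x⁻²) A = x⁻²`, so the sum collapses to
`(-1)^k x^3 t^k (1 + (1 - x⁻²) t)`.
-/

/-- Binomial coefficient C(a,b) for integer arguments, with the convention
    C(a,b) = 0 when b < 0 or b > a. -/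
def intChoose (a b : ℤ) : ℤ :=
  if 0 ≤ b ∧ b ≤ a then (a.toNat.choose b.toNat : ℤ) else 0

/-- P_{n,k,l}(x) = ∑_{s=0}^{l} (-1)^s C(n-k,s) C(n-s-1,l-s) x^{n-2s}, as a function of
    an (invertible) field element x; for l < 0 all terms vanish (the sum degenerates to
    the single s = 0 term containing C(n-1,l) = 0), so P_{n,k,l} = 0 for l < 0. -/
def Ppoly {K : Type*} [Field K] (x : K) (n k l : ℤ) : K :=
  ∑ s ∈ Finset.range (l.toNat + 1),
    (-1 : K) ^ s * (intChoose (n - k) (s : ℤ) : K) *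
      (intChoose (n - (s : ℤ) - 1) (l - (s : ℤ)) : K) * x ^ (n - 2 * (s : ℤ))

open Finset Polynomial

theorem intChoose_natCast (a b : ℕ) : intChoose a b = a.choose b := by
  unfold intChoose
  split_ifs with h
  · simp
  · rw [Nat.choose_eq_zero_of_lt (by omega), Nat.cast_zero]

theorem intChoose_of_neg (a : ℤ) {b : ℤ} (h : b < 0) : intChoose a b = 0 :=
  if_neg (by omega)

theorem intChoose_of_lt {a b : ℤ} (h : a < b) : intChoose a b = 0 :=
  if_neg (by omega)

/-- The right-hand side expanded binomially twice, with the terms collected along `s = j + t`. -/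
theorem sum_sum_choose_mul_choose_mul_pow {R : Type*} [CommSemiring R] (k m : ℕ) (c A B : R) :
    ∑ s ∈ range (k + m + 1),
        (∑ j ∈ range (s + 1), (m.choose j : R) * (k + m - j).choose (s - j) * c ^ j) *
          (A ^ s * B ^ (k + m - s))
      = (A + B) ^ k * (B + (1 + c) * A) ^ m := by
  set N := k + m
  have inner : ∀ j ≤ N,
      ∑ s ∈ Ico j (N + 1), (m.choose j : R) * (N - j).choose (s - j) * c ^ j *
          (A ^ s * B ^ (N - s))
        = m.choose j * c ^ j * A ^ j * (A + B) ^ (N - j) := by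
    intro j hj
    rw [sum_Ico_eq_sum_range, show N + 1 - j = N - j + 1 by omega, add_pow, mul_sum]
    refine sum_congr rfl fun t ht => ?_
    rw [mem_range] at ht
    rw [show j + t - j = t by omega, show N - (j + t) = N - j - t by omega, pow_add]
    ring
  have outer : (A + B) ^ k * (B + (1 + c) * A) ^ m
      = ∑ j ∈ range (m + 1), (m.choose j : R) * c ^ j * A ^ j * (A + B) ^ (N - j) := by
    rw [show B + (1 + c) * A = c * A + (A + B) by ring, add_pow (c * A), mul_sum]
    refine sum_congr rfl fun j hj => ?_
    rw [mem_range] at hj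
    rw [show N - j = k + (m - j) by omega, pow_add, mul_pow]
    ring
  calc _ = ∑ s ∈ range (N + 1), ∑ j ∈ range (s + 1), (m.choose j : R) * (N - j).choose (s - j) *
          c ^ j * (A ^ s * B ^ (N - s)) := by simp only [sum_mul]
    _ = ∑ j ∈ range (N + 1), ∑ s ∈ Ico j (N + 1), (m.choose j : R) * (N - j).choose (s - j) *
          c ^ j * (A ^ s * B ^ (N - s)) := by
        simp only [← Nat.Ico_zero_eq_range]
        exact (sum_Ico_Ico_comm 0 (N + 1) _).symm
    _ = ∑ j ∈ range (N + 1), (m.choose j : R) * c ^ j * A ^ j * (A + B) ^ (N - j) :=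
        sum_congr rfl fun j hj => inner j (by rw [mem_range] at hj; omega)
    _ = _ := by
        rw [outer]
        refine (sum_subset (range_subset_range.mpr (by omega)) fun j _ hj => ?_).symm
        rw [mem_range, not_lt] at hj
        rw [Nat.choose_eq_zero_of_lt (by omega), Nat.cast_zero, zero_mul, zero_mul, zero_mul]

section Ppoly

variable {K : Type*} [Field K] (x : K)

theorem Ppoly_of_neg (n k : ℤ) {l : ℤ} (h : l < 0) : Ppoly x n k l = 0 := by
  rw [Ppoly, show l.toNat = 0 by omega, sum_range_one, Nat.cast_zero,
    intChoose_of_neg _ (by omega : l - 0 < 0)]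
  simp

theorem Ppoly_of_le {n l : ℤ} (k : ℤ) (h : n ≤ l) : Ppoly x n k l = 0 := by
  refine sum_eq_zero fun j _ => ?_
  rcases lt_or_ge (l - j) 0 with h' | h'
  · rw [intChoose_of_neg _ h']; simp
  · rw [intChoose_of_lt (a := n - j - 1) (by omega)]; simp

variable {x}

theorem Ppoly_natCast_eq {k m l : ℕ} (hx : x ≠ 0) (hl : l ≤ k + m) :
    Ppoly x ↑(k + m + 1) (k + 1) l
      = x ^ (k + m + 1) * ∑ j ∈ range (l + 1),
          (m.choose j : K) * (k + m - j).choose (l - j) * (-x⁻¹ ^ 2) ^ j := by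
  rw [Ppoly, Int.toNat_natCast, mul_sum]
  refine sum_congr rfl fun j hj => ?_
  rw [mem_range] at hj
  rw [show ((k + m + 1 : ℕ) : ℤ) - (k + 1) = (m : ℕ) by push_cast; ring,
    show ((k + m + 1 : ℕ) : ℤ) - j - 1 = (k + m - j : ℕ) by
      push_cast [Nat.cast_sub (by omega : j ≤ k + m)]; ring,
    show (l : ℤ) - j = (l - j : ℕ) by push_cast [Nat.cast_sub (by omega : j ≤ l)]; ring,
    intChoose_natCast, intChoose_natCast, zpow_sub₀ hx,
    show 2 * (j : ℤ) = (2 * j : ℕ) by push_cast; ring,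
    zpow_natCast, zpow_natCast, div_eq_mul_inv, neg_pow, ← inv_pow, pow_mul]
  push_cast
  ring

theorem sum_algebraMap_Ppoly_mul_pow_mul_pow {R : Type*} [CommSemiring R] [Algebra K R]
    (hx : x ≠ 0) (k m : ℕ) (A B : R) :
    ∑ s ∈ range (k + m + 1),
        algebraMap K R (Ppoly x ↑(k + m + 1) (k + 1) s) * (A ^ s * B ^ (k + m - s))
      = algebraMap K R (x ^ (k + m + 1)) *
          ((A + B) ^ k * (B + algebraMap K R (1 - x⁻¹ ^ 2) * A) ^ m) := by
  rw [show algebraMap K R (1 - x⁻¹ ^ 2) = 1 + algebraMap K R (-x⁻¹ ^ 2) by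
      rw [sub_eq_add_neg, map_add, map_one],
    ← sum_sum_choose_mul_choose_mul_pow, mul_sum]
  refine sum_congr rfl fun s hs => ?_
  rw [Ppoly_natCast_eq hx (by rw [mem_range] at hs; omega)]
  simp only [map_mul, map_sum, map_natCast, map_pow, mul_assoc]

variable (x) in
noncomputable def Ppoly.generatingPoly (n s : ℕ) : K[X] :=
  C (x ^ (n + 1)) * ((X + 1) ^ s * (1 + C (1 - x⁻¹ ^ 2) * X) ^ (n - s))

theorem Ppoly.coeff_generatingPoly (hx : x ≠ 0) {n s : ℕ} (hs : s ≤ n) (l : ℕ) :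
    (generatingPoly x n s).coeff l = Ppoly x (n + 1) (s + 1) l := by
  symm
  obtain ⟨m, rfl⟩ := Nat.exists_eq_add_of_le hs
  have hgen := sum_algebraMap_Ppoly_mul_pow_mul_pow hx s m (X : K[X]) 1
  simp only [algebraMap_eq, one_pow, mul_one] at hgen
  rw [generatingPoly, add_tsub_cancel_left, ← hgen, finsetSum_coeff]
  simp only [coeff_C_mul_X_pow, sum_ite_eq, mem_range]
  split_ifs with hl
  · push_cast; rfl
  · exact Ppoly_of_le x _ (by push_cast; omega)

theorem sum_neg_one_pow_mul_Ppoly_mul_generatingPoly (hx : x ≠ 0) (k m : ℕ) :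
    ∑ s ∈ range (k + m + 2),
        C ((-1) ^ s * Ppoly x ↑(k + m + 1) (k + 1) s) * Ppoly.generatingPoly x (k + m + 1) s
      = C ((-1) ^ k * x ^ 3) * X ^ k * (1 + C (1 - x⁻¹ ^ 2) * X) := by
  unfold Ppoly.generatingPoly
  set B : K[X] := 1 + C (1 - x⁻¹ ^ 2) * X
  have hterm : ∀ s ∈ range (k + m + 1),
      C ((-1) ^ s * Ppoly x ↑(k + m + 1) (k + 1) s) *
          (C (x ^ (k + m + 2)) * ((X + 1) ^ s * B ^ (k + m + 1 - s)))
        = C (x ^ (k + m + 2)) * B *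
            (C (Ppoly x ↑(k + m + 1) (k + 1) s) * ((-(X + 1)) ^ s * B ^ (k + m - s))) := by
    intro s hs
    rw [mem_range] at hs
    rw [show k + m + 1 - s = k + m - s + 1 by omega, neg_pow (X + 1 : K[X]), map_mul, map_pow,
      map_neg, map_one]
    ring
  have hgen := sum_algebraMap_Ppoly_mul_pow_mul_pow hx k m (-(X + 1)) B
  simp only [algebraMap_eq] at hgen
  have hsum : -(X + 1) + B = C (-x⁻¹ ^ 2) * X := by
    simp only [B, map_neg, map_sub, map_one]; ring
  have hdiff : B + C (1 - x⁻¹ ^ 2) * -(X + 1) = C (x⁻¹ ^ 2) := by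
    simp only [B, map_sub, map_one]; ring
  have hscalar : x ^ (k + m + 2) * x ^ (k + m + 1) * (-x⁻¹ ^ 2) ^ k * (x⁻¹ ^ 2) ^ m
      = (-1) ^ k * x ^ 3 := by
    calc _ = (-1) ^ k * x ^ 3 * (x * x⁻¹) ^ (2 * (k + m)) := by ring
      _ = _ := by rw [mul_inv_cancel₀ hx, one_pow, mul_one]
  rw [sum_range_succ, Ppoly_of_le x _ le_rfl, mul_zero, map_zero, zero_mul, add_zero,
    sum_congr rfl hterm, ← mul_sum, hgen, hsum, hdiff, ← hscalar]
  simp only [map_mul, map_pow]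
  ring

end Ppoly

/-- ∑_{s=0}^{n} (-1)^s P_{n,k+1,s}(x) P_{n+1,s+1,l}(x)
      = (-1)^k (δ_{k,l} x³ + δ_{k,l-1}(x³ − x)), for n ≥ 1, 0 ≤ k ≤ n-1, any integer l. -/
theorem Ppoly_convolution_one {K : Type*} [Field K] (x : K) (hx : x ≠ 0)
    (n k : ℕ) (hn : 1 ≤ n) (hk : k ≤ n - 1) (l : ℤ) :
    ∑ s ∈ Finset.range (n + 1),
        (-1 : K) ^ s * Ppoly x (n : ℤ) ((k : ℤ) + 1) (s : ℤ) *
          Ppoly x ((n : ℤ) + 1) ((s : ℤ) + 1) l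
      = (-1 : K) ^ k *
          ((if (k : ℤ) = l then 1 else 0) * x ^ 3 +
            (if (k : ℤ) = l - 1 then 1 else 0) * (x ^ 3 - x)) := by
  rcases lt_or_ge l 0 with hl | hl
  · simp only [Ppoly_of_neg x _ _ hl, mul_zero, sum_const_zero]
    rw [if_neg (by omega), if_neg (by omega)]
    ring
  lift l to ℕ using hl
  obtain ⟨m, rfl⟩ : ∃ m, n = k + m + 1 := ⟨n - 1 - k, by omega⟩
  have hx3 : (-1) ^ k * x ^ 3 * (1 - x⁻¹ ^ 2) = (-1) ^ k * (x ^ 3 - x) := by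
    field_simp
  calc _ = ∑ s ∈ range (k + m + 2), (C ((-1) ^ s * Ppoly x ↑(k + m + 1) (k + 1) s) *
          Ppoly.generatingPoly x (k + m + 1) s).coeff l :=
        sum_congr rfl fun s hs => by
          rw [coeff_C_mul, Ppoly.coeff_generatingPoly hx (mem_range_succ_iff.mp hs)]
    _ = (C ((-1) ^ k * x ^ 3) * X ^ k +
          C ((-1) ^ k * x ^ 3 * (1 - x⁻¹ ^ 2)) * X ^ (k + 1)).coeff l := by
        rw [← finsetSum_coeff, sum_neg_one_pow_mul_Ppoly_mul_generatingPoly hx,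
          map_mul C ((-1) ^ k * x ^ 3), pow_succ (X : K[X]) k]
        congr 1
        ring
    _ = _ := by
        rw [coeff_add, coeff_C_mul_X_pow, coeff_C_mul_X_pow, hx3]
        split_ifs <;> first | omega | ring
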